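/- In the quotient algebra A_E = ℚ⟨y₁, y₂, …⟩/⟨χ₂, χ₄, …⟩ where χ_{2m} = ∑_{r+s=2m, r,s ≥ 0} (-1)^r y_r y_s (with y₀ = 1), the map ψ sending y_i ↦ q_i extends to a well-defined algebra homomorphism ψ: A_E → Ω onto the algebra of Schur Q-functions, and ψ sends the flag-h operator 𝔥_α = ∑_{β ⪰ α} (-1)^{ℓ(α)-ℓ(β)} y_β to the ribbon Schur Q-function 𝔯_α. -/
import Mathlib


/-- The polynomial `q_n` (with `q_0 = 1`) in `ℚ[q₁, q₂, q₃, …]`. -/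
noncomputable def QPoly (n : ℕ) : MvPolynomial ℕ ℚ := if n = 0 then 1 else MvPolynomial.X n

/-- The even Euler forms `χ_{2m} = ∑_{r+s=2m} (-1)^r q_r q_s`, `m ≥ 1`. -/
def eulerSet : Set (MvPolynomial ℕ ℚ) :=
  {p | ∃ m : ℕ, 1 ≤ m ∧ p = ∑ r ∈ Finset.range (2*m + 1), (-1) ^ r * QPoly r * QPoly (2*m - r)}

/-- `Ω ⊗ ℚ = ℚ[q₁, q₂, q₃, …]/(even Euler relations) ≅ ℚ[q₁, q₃, q₅, …]`. -/
abbrev OmegaQ : Type := MvPolynomial ℕ ℚ ⧸ Ideal.span eulerSet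

/-- The generators `q_n` of `Ω` (with `q 0 = 1`). -/
noncomputable def q (n : ℕ) : OmegaQ := Ideal.Quotient.mk (Ideal.span eulerSet) (QPoly n)

/-- A composition: a nonempty list of positive integers. -/
def IsComposition (α : List ℕ) : Prop := α ≠ [] ∧ ∀ a ∈ α, 0 < a

/-- `α ⊙ β`: add the last part of `α` to the first part of `β`. -/
def compNcat (α β : List ℕ) : List ℕ :=
  match α.reverse with
  | [] => β
  | a :: as =>
    match β with
    | [] => α
    | b :: bs => as.reverse ++ (a + b) :: bs

/-- The list of all coarsenings of a composition (obtained by adding adjacent parts). -/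
def coarsenings : List ℕ → List (List ℕ)
  | [] => [[]]
  | [a] => [[a]]
  | a :: b :: t => ((coarsenings (b :: t)).map (a :: ·)) ++ coarsenings ((a + b) :: t)
  termination_by α => α.length

/-- `q_{λ(β)} = q_{β₁} ⋯ q_{β_m}`. -/
noncomputable def qProd (β : List ℕ) : OmegaQ := (β.map q).prod

/-- The ribbon Schur Q-function `𝔯_α = (-1)^{ℓ(α)} ∑_{β ⪰ α} (-1)^{ℓ(β)} q_{λ(β)}`. -/
noncomputable def ribbonQ (α : List ℕ) : OmegaQ :=
  (-1) ^ α.length * ((coarsenings α).map (fun β => (-1 : OmegaQ) ^ β.length * qProd β)).sum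

/-- The generator `y_n` of the free algebra (with `y 0 = 1`). -/
noncomputable def Y (n : ℕ) : FreeAlgebra ℚ ℕ := if n = 0 then 1 else FreeAlgebra.ι ℚ n

/-- The even Euler form `χ_{2m} = ∑_{r+s=2m, r,s ≥ 0} (-1)^r y_r y_s` with `y₀ = 1`. -/
noncomputable def chiForm (m : ℕ) : FreeAlgebra ℚ ℕ :=
  ∑ r ∈ Finset.range (2*m + 1), (-1) ^ r * Y r * Y (2*m - r)

/-- The relations `χ_{2m} = 0`, `m ≥ 1`, defining `A_E`. -/
def AErel (a b : FreeAlgebra ℚ ℕ) : Prop := ∃ m : ℕ, 1 ≤ m ∧ a = chiForm m ∧ b = 0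

/-- `A_E = ℚ⟨y₁, y₂, …⟩/⟨χ₂, χ₄, …⟩`, the flag algebra of Eulerian posets. -/
abbrev AE : Type := RingQuot AErel

/-- The image of `y_n` in `A_E`. -/
noncomputable def yGen (n : ℕ) : AE := RingQuot.mkAlgHom ℚ AErel (Y n)

/-- The flag-`h` operator `𝔥_α = ∑_{β ⪰ α} (-1)^{ℓ(α)-ℓ(β)} y_β` in `A_E`. -/
noncomputable def flagH (α : List ℕ) : AE :=
  ((coarsenings α).map (fun β =>
    (-1 : AE) ^ (α.length - β.length) * (β.map yGen).prod)).sum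


noncomputable def psi0 : FreeAlgebra ℚ ℕ →ₐ[ℚ] OmegaQ :=
  FreeAlgebra.lift ℚ (fun n => Ideal.Quotient.mk (Ideal.span eulerSet) (MvPolynomial.X n))

theorem psi0_Y (n : ℕ) : psi0 (Y n) = q n := by
  by_cases h : n = 0
  · simp [Y, q, QPoly, h]
  · simp [Y, q, QPoly, h, psi0]

set_option synthInstance.maxHeartbeats 1000000 in
theorem psi0_rel : ∀ a b, AErel a b → psi0 a = psi0 b := by
  rintro _ _ ⟨m, hm, rfl, rfl⟩
  have hmem : (∑ r ∈ Finset.range (2*m + 1), (-1) ^ r * QPoly r * QPoly (2*m - r))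
      ∈ Ideal.span eulerSet := Ideal.subset_span ⟨m, hm, rfl⟩
  have h0 := (Ideal.Quotient.eq_zero_iff_mem).2 hmem
  rw [map_zero, chiForm, map_sum, ← h0, map_sum]
  refine Finset.sum_congr rfl (fun r _ => ?_)
  rw [map_mul, map_mul, map_pow, map_neg, map_one, psi0_Y, psi0_Y,
    map_mul, map_mul, map_pow, map_neg, map_one]
  simp [q]

noncomputable def psiA : AE →ₐ[ℚ] OmegaQ :=
  RingQuot.liftAlgHom ℚ ⟨psi0, psi0_rel⟩

theorem psiA_yGen (n : ℕ) : psiA (yGen n) = q n := by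
  rw [yGen, psiA, RingQuot.liftAlgHom_mkAlgHom_apply, psi0_Y]

theorem psiA_surj : Function.Surjective psiA := by
  intro x
  obtain ⟨p, rfl⟩ := Ideal.Quotient.mk_surjective x
  induction p using MvPolynomial.induction_on with
  | C a =>
    refine ⟨algebraMap ℚ AE a, ?_⟩
    rw [AlgHom.commutes]
    rfl
  | add p1 p2 h1 h2 =>
    obtain ⟨a, ha⟩ := h1; obtain ⟨b, hb⟩ := h2
    exact ⟨a + b, by rw [map_add, ha, hb, map_add]⟩
  | mul_X p n h =>
    obtain ⟨a, ha⟩ := h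
    refine ⟨a * RingQuot.mkAlgHom ℚ AErel (FreeAlgebra.ι ℚ n), ?_⟩
    rw [map_mul, ha, map_mul]
    congr 1
    rw [psiA, RingQuot.liftAlgHom_mkAlgHom_apply]
    simp [psi0]

theorem coarsenings_length : ∀ (α : List ℕ), ∀ β ∈ coarsenings α, β.length ≤ α.length
  | [] => by simp [coarsenings]
  | [a] => by simp [coarsenings]
  | a :: b :: t => by
    intro β hβ
    simp only [coarsenings, List.mem_append, List.mem_map] at hβ
    rcases hβ with ⟨γ, hγ, rfl⟩ | h
    · have := coarsenings_length (b :: t) γ hγ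
      simpa using Nat.succ_le_succ this
    · have := coarsenings_length ((a + b) :: t) β h
      simpa using this.trans (by simp)
  termination_by α => α.length

theorem psiA_flagH (α : List ℕ) : psiA (flagH α) = ribbonQ α := by
  rw [flagH, ribbonQ, map_list_sum, List.map_map, ← List.sum_map_mul_left]
  congr 1
  refine List.map_congr_left (fun β hβ => ?_)
  have hlen := coarsenings_length α β hβ
  have hψ : psiA ((β.map yGen).prod) = qProd β := by
    rw [map_list_prod, List.map_map, qProd]
    congr 1
    exact List.map_congr_left (fun n _ => psiA_yGen n)
  simp only [Function.comp, map_mul, map_pow, map_neg, map_one, hψ]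
  rw [← mul_assoc]
  congr 1
  have hab : ((-1 : OmegaQ)) ^ (α.length - β.length) * (-1) ^ β.length = (-1) ^ α.length := by
    rw [← pow_add, Nat.sub_add_cancel hlen]
  have hb : ((-1 : OmegaQ)) ^ β.length * (-1) ^ β.length = 1 := by
    have h2 : ((-1 : OmegaQ)) ^ 2 = 1 := by ring
    rw [← pow_add, ← two_mul, pow_mul, h2, one_pow]
  calc ((-1 : OmegaQ)) ^ (α.length - β.length)
      = (-1) ^ (α.length - β.length) * ((-1) ^ β.length * (-1) ^ β.length) := by
        rw [hb, mul_one]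
    _ = (-1) ^ α.length * (-1) ^ β.length := by rw [← mul_assoc, hab]

/-- the assignment `y_i ↦ q_i` extends to a well-defined surjective algebra
homomorphism `ψ : A_E → Ω`, and `ψ` sends the flag-`h` operator `𝔥_α` to the ribbon
Schur Q-function `𝔯_α`. -/
theorem exists_psi :
    ∃ ψ : AE →ₐ[ℚ] OmegaQ,
      Function.Surjective ψ ∧
      (∀ i : ℕ, 1 ≤ i → ψ (yGen i) = q i) ∧
      (∀ α : List ℕ, IsComposition α → ψ (flagH α) = ribbonQ α) :=
  ⟨psiA, psiA_surj, fun i _ => psiA_yGen i, fun α _ => psiA_flagH α⟩
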